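/- Let G = K ⋊ H be a semidirect product where H is an abelian p-group and K is a p'-group, and let I ≤ H. Then the number of Sylow p-subgroups of G containing I equals |C_K(I)| / |C_K(H)|. -/

import Mathlib

/-!
Since `|G : H| = |K|` is prime to `p`, `H` is a Sylow `p`-subgroup, and since `G = K H` with `H`
normalizing itself, every Sylow `p`-subgroup is `k H k⁻¹` for some `k ∈ K`. For `k ∈ K` and
`h ∈ H`, `k h k⁻¹ ∈ H` forces the commutator `k h k⁻¹ h⁻¹` into `K ⊓ H = ⊥`, so `I ≤ k H k⁻¹`
exactly when `k` centralizes `I`, and `k H k⁻¹ = H` exactly when `k` centralizes `H`. Hence the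
Sylow subgroups containing `I` form a single orbit of `C_K(I)` with stabilizer `C_K(H)`, and the
orbit–stabilizer theorem gives the count.
-/

open Pointwise

namespace Subgroup

variable {G : Type*} [Group G] {K H : Subgroup G}

theorem commute_of_conj_mem (hK : K.Normal) (hKH : K ⊓ H = ⊥) {k h : G} (hk : k ∈ K)
    (hh : h ∈ H) (hkh : k * h * k⁻¹ ∈ H) : Commute k h := by
  have hK' : k * (h * k⁻¹ * h⁻¹) ∈ K := mul_mem hk (hK.conj_mem _ (inv_mem hk) h)
  have hH' : k * h * k⁻¹ * h⁻¹ ∈ H := mul_mem hkh (inv_mem hh)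
  have h1 : k * h * k⁻¹ * h⁻¹ = 1 := by
    rw [← mem_bot, ← hKH, mem_inf]
    exact ⟨by simpa only [mul_assoc] using hK', hH'⟩
  rwa [mul_inv_eq_one, mul_inv_eq_iff_eq_mul] at h1

theorem le_conj_smul_iff_mem_centralizer (hK : K.Normal) (hKH : K ⊓ H = ⊥) {I : Subgroup G}
    (hIH : I ≤ H) {k : G} (hk : k ∈ K) :
    I ≤ MulAut.conj k • H ↔ k ∈ centralizer (I : Set G) := by
  simp only [SetLike.le_def, mem_pointwise_smul_iff_inv_smul_mem, mem_centralizer_iff]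
  refine forall₂_congr fun x hx => ⟨fun hkx => ?_, fun hkx => ?_⟩
  · have : k⁻¹ * x * k⁻¹⁻¹ ∈ H := by simpa [MulAut.smul_def] using hkx
    exact (Commute.inv_left_iff.mp (commute_of_conj_mem hK hKH (inv_mem hk) (hIH hx) this)).symm
  · simpa [MulAut.smul_def, mul_assoc, hkx] using hIH hx

theorem mem_normalizer_iff_mem_centralizer (hK : K.Normal) (hKH : K ⊓ H = ⊥) {k : G}
    (hk : k ∈ K) : k ∈ normalizer (H : Set G) ↔ k ∈ centralizer (H : Set G) := by
  refine ⟨fun hN => mem_centralizer_iff.mpr fun h hh => ?_,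
    fun hC => centralizer_le_normalizer _ hC⟩
  exact (commute_of_conj_mem hK hKH hk hh ((mem_normalizer_iff.mp hN h).mp hh)).symm

theorem isComplement'_of_inf_eq_bot_of_sup_eq_top (hK : K.Normal) (hKH : K ⊓ H = ⊥)
    (hsup : K ⊔ H = ⊤) : IsComplement' K H :=
  isComplement'_of_disjoint_and_mul_eq_univ (disjoint_iff.mpr hKH) (by
    rw [← normal_mul, hsup, coe_top])

theorem relIndex_eq_card_div [Finite G] {B C : Subgroup G} (hBC : B ≤ C) :
    B.relIndex C = Nat.card C / Nat.card B := by
  have h := relIndex_mul_relIndex ⊥ B C bot_le hBC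
  rw [relIndex_bot_left, relIndex_bot_left] at h
  exact (Nat.div_eq_of_eq_mul_right Nat.card_pos h.symm).symm

end Subgroup

namespace Sylow

open Subgroup MulAction

variable {G : Type*} [Group G] {p : ℕ} {K : Subgroup G} {P : Sylow p G} {I : Subgroup G}

theorem stabilizer_eq_subgroupOf (hK : K.Normal) (hKP : K ⊓ P = ⊥) :
    stabilizer ↥(centralizer (I : Set G) ⊓ K) P =
      (centralizer (P : Set G) ⊓ K).subgroupOf (centralizer (I : Set G) ⊓ K) := by
  ext c
  have hcK : (c : G) ∈ K := (mem_inf.mp c.2).2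
  rw [mem_stabilizer_iff, mem_subgroupOf, Subgroup.smul_def, smul_eq_iff_mem_normalizer,
    mem_inf, and_iff_left hcK]
  exact mem_normalizer_iff_mem_centralizer hK hKP hcK

section Conjugacy

variable [Fact p.Prime] [Finite (Sylow p G)]

theorem exists_mem_smul_eq_of_sup_eq_top (hK : K.Normal) (hKP : K ⊔ P = ⊤) (Q : Sylow p G) :
    ∃ k ∈ K, k • P = Q := by
  obtain ⟨g, rfl⟩ := exists_smul_eq G P Q
  obtain ⟨k, hk, h, hh, rfl⟩ := mem_sup_of_normal_left.mp (hKP ▸ mem_top g)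
  exact ⟨k, hk, by rw [mul_smul, smul_eq_iff_mem_normalizer.mpr (le_normalizer hh)]⟩

theorem setOf_le_eq_orbit (hK : K.Normal) (hKP : K ⊓ P = ⊥) (hsup : K ⊔ P = ⊤) (hIP : I ≤ P) :
    {S : Sylow p G | I ≤ S} = orbit ↥(centralizer (I : Set G) ⊓ K) P := by
  ext S
  constructor
  · intro hIS
    obtain ⟨k, hk, rfl⟩ := exists_mem_smul_eq_of_sup_eq_top hK hsup S
    exact ⟨⟨k, (le_conj_smul_iff_mem_centralizer hK hKP hIP hk).mp hIS, hk⟩, rfl⟩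
  · rintro ⟨⟨c, hcI, hcK⟩, rfl⟩
    exact (le_conj_smul_iff_mem_centralizer hK hKP hIP hcK).mpr hcI

end Conjugacy

theorem card_le_eq_card_centralizer_div [Fact p.Prime] [Finite G] (hK : K.Normal)
    (hKP : K ⊓ P = ⊥) (hsup : K ⊔ P = ⊤) (hIP : I ≤ P) :
    Nat.card {S : Sylow p G // I ≤ S} =
      Nat.card ↥(centralizer (I : Set G) ⊓ K) / Nat.card ↥(centralizer (P : Set G) ⊓ K) := by
  have hle : centralizer (P : Set G) ⊓ K ≤ centralizer (I : Set G) ⊓ K :=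
    inf_le_inf_right K (centralizer_le hIP)
  rw [← relIndex_eq_card_div hle, relIndex, ← stabilizer_eq_subgroupOf hK hKP,
    index_stabilizer, ← setOf_le_eq_orbit hK hKP hsup hIP]
  exact Nat.card_coe_set_eq _

end Sylow

theorem stmt2_general {G : Type*} [Group G] [Finite G] (p : ℕ) [Fact p.Prime]
    (K H : Subgroup G) (hKn : K.Normal) (hdisj : K ⊓ H = ⊥) (hsup : K ⊔ H = ⊤)
    (hHp : IsPGroup p H)
    (hK' : ¬ p ∣ Nat.card K)
    (I : Subgroup G) (hIH : I ≤ H) :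
    Nat.card {S : Sylow p G // I ≤ (S : Subgroup G)} =
      Nat.card ↥(Subgroup.centralizer (I : Set G) ⊓ K) /
        Nat.card ↥(Subgroup.centralizer (H : Set G) ⊓ K) := by
  have hindex : H.index = Nat.card K :=
    (Subgroup.isComplement'_of_inf_eq_bot_of_sup_eq_top hKn hdisj hsup).index_eq_card
  exact Sylow.card_le_eq_card_centralizer_div (P := hHp.toSylow (hindex ▸ hK')) hKn hdisj hsup hIH

/-- In a semidirect product `G = K ⋊ H` with `H` an abelian `p`-group and `K` a `p'`-group,
for a subgroup `I ≤ H` the number of Sylow `p`-subgroups of `G` containing `I`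
equals `|C_K(I)| / |C_K(H)|`. -/
theorem stmt2 {G : Type*} [Group G] [Finite G] (p : ℕ) [Fact p.Prime]
    (K H : Subgroup G) (hKn : K.Normal) (hdisj : K ⊓ H = ⊥) (hsup : K ⊔ H = ⊤)
    (hHp : IsPGroup p H) (hHab : ∀ a ∈ H, ∀ b ∈ H, a * b = b * a)
    (hK' : ¬ p ∣ Nat.card K)
    (I : Subgroup G) (hIH : I ≤ H) :
    Nat.card {S : Sylow p G // I ≤ (S : Subgroup G)} =
      Nat.card ↥(Subgroup.centralizer (I : Set G) ⊓ K) /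
        Nat.card ↥(Subgroup.centralizer (H : Set G) ⊓ K) :=
  stmt2_general p K H hKn hdisj hsup hHp hK' I hIH
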